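/- Let T be a nondegenerate triangle in the plane with edges e_1, e_2, e_3, unit normals n_i and unit tangents t_i on each edge, and barycentric coordinates λ_1, λ_2, λ_3. If v ∈ (P_2(T))^2 (each component a polynomial of total degree ≤ 2) satisfies, for every edge e_i with opposite-vertex-indexed coordinates λ_j, λ_k: (1/|e_i|)∫_{e_i} v·n_i ds = 0, (1/|e_i|)∫_{e_i} v·n_i (λ_j - λ_k) ds = 0, (1/|e_i|)∫_{e_i} v·n_i(-λ_j λ_k + 1/6) ds = 0, and (1/|e_i|)∫_{e_i} v·t_i ds = 0, then v = 0. In particular these 12 functionals are unisolvent for (P_2(T))^2. -/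
import Mathlib

open MvPolynomial

lemma intpoly (c0 c1 c2 c3 c4 : ℝ) :
    (∫ t in (0:ℝ)..1, (c0 + c1*t + c2*t^2 + c3*t^3 + c4*t^4))
      = c0 + c1/2 + c2/3 + c3/4 + c4/5 := by
  have h : ∀ t ∈ Set.uIcc (0:ℝ) 1,
      HasDerivAt (fun s : ℝ => c0*s + c1*s^2/2 + c2*s^3/3 + c3*s^4/4 + c4*s^5/5)
        (c0 + c1*t + c2*t^2 + c3*t^3 + c4*t^4) t := by
    intro t _
    have h1 : HasDerivAt (fun s : ℝ => c0*s + c1*s^2/2 + c2*s^3/3 + c3*s^4/4 + c4*s^5/5)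
        (c0*1 + c1*(2*t^1)/2 + c2*(3*t^2)/3 + c3*(4*t^3)/4 + c4*(5*t^4)/5) t := by
      exact ((((hasDerivAt_id t).const_mul c0).add
        (((hasDerivAt_pow 2 t).const_mul c1).div_const 2)).add
        (((hasDerivAt_pow 3 t).const_mul c2).div_const 3)).add
        (((hasDerivAt_pow 4 t).const_mul c3).div_const 4) |>.add
        (((hasDerivAt_pow 5 t).const_mul c4).div_const 5)
    convert h1 using 1; ring
  rw [intervalIntegral.integral_eq_sub_of_hasDerivAt h
    ((by continuity : Continuous fun t : ℝ => c0 + c1*t + c2*t^2 + c3*t^3 + c4*t^4).intervalIntegrable 0 1)]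
  norm_num

lemma momzero (g : ℝ → ℝ) (F0 F1 F2 : ℝ) (hg : ∀ t, g t = F0 + F1*t + F2*t^2)
    (h0 : (∫ t in (0:ℝ)..1, g t) = 0)
    (h1 : (∫ t in (0:ℝ)..1, g t * ((1-t)-t)) = 0)
    (h2 : (∫ t in (0:ℝ)..1, g t * (-((1-t)*t)+1/6)) = 0) :
    ∀ s, g s = 0 := by
  rw [show (∫ t in (0:ℝ)..1, g t)
      = ∫ t in (0:ℝ)..1, (F0 + F1*t + F2*t^2 + 0*t^3 + 0*t^4) from
    intervalIntegral.integral_congr (fun t _ => by rw [hg]; ring), intpoly] at h0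
  rw [show (∫ t in (0:ℝ)..1, g t * ((1-t)-t))
      = ∫ t in (0:ℝ)..1, (F0 + (F1-2*F0)*t + (F2-2*F1)*t^2 + (-2*F2)*t^3 + 0*t^4) from
    intervalIntegral.integral_congr (fun t _ => by rw [hg]; ring), intpoly] at h1
  rw [show (∫ t in (0:ℝ)..1, g t * (-((1-t)*t)+1/6))
      = ∫ t in (0:ℝ)..1, (F0/6 + (F1/6-F0)*t + (F0-F1+F2/6)*t^2 + (F1-F2)*t^3 + F2*t^4) from
    intervalIntegral.integral_congr (fun t _ => by rw [hg]; ring), intpoly] at h2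
  have hF2 : F2 = 0 := by linarith
  have hF1 : F1 = 0 := by linarith
  have hF0 : F0 = 0 := by linarith
  intro s; rw [hg, hF0, hF1, hF2]; ring

lemma quadzero (g : ℝ → ℝ) (F0 F1 F2 : ℝ) (hg : ∀ t, g t = F0 + F1*t + F2*t^2)
    (h0 : g 0 = 0) (h1 : g 1 = 0)
    (hint : (∫ t in (0:ℝ)..1, g t) = 0) : ∀ s, g s = 0 := by
  rw [show (∫ t in (0:ℝ)..1, g t)
      = ∫ t in (0:ℝ)..1, (F0 + F1*t + F2*t^2 + 0*t^3 + 0*t^4) from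
    intervalIntegral.integral_congr (fun t _ => by rw [hg]; ring), intpoly] at hint
  rw [hg] at h0 h1
  have hF0 : F0 = 0 := by linarith [h0]
  have hF1 : F1 = 0 := by nlinarith [h0, h1, hint]
  have hF2 : F2 = 0 := by nlinarith [h0, h1, hint]
  intro s; rw [hg, hF0, hF1, hF2]; ring

lemma edgeA (p0 p1 p2 p3 p4 p5 q0 q1 q2 q3 q4 q5 X Y Z W L : ℝ) (g : ℝ → ℝ)
    (hg : ∀ t : ℝ, g t = L * ((p0 + p1*(X + t*(Z-X)) + p2*(Y + t*(W-Y)) + p3*(X + t*(Z-X))^2 + p4*((X + t*(Z-X))*(Y + t*(W-Y))) + p5*(Y + t*(W-Y))^2) * (W-Y) - (q0 + q1*(X + t*(Z-X)) + q2*(Y + t*(W-Y)) + q3*(X + t*(Z-X))^2 + q4*((X + t*(Z-X))*(Y + t*(W-Y))) + q5*(Y + t*(W-Y))^2) * (Z-X)))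
    (h0 : (∫ t in (0:ℝ)..1, g t) = 0)
    (h1 : (∫ t in (0:ℝ)..1, g t * ((1-t)-t)) = 0)
    (h2 : (∫ t in (0:ℝ)..1, g t * (-((1-t)*t)+1/6)) = 0) :
    ∀ s, g s = 0 := by
  refine momzero g
    (L * ((p0 + p1*X + p2*Y + p3*X^2 + p4*(X*Y) + p5*Y^2) * (W-Y) - (q0 + q1*X + q2*Y + q3*X^2 + q4*(X*Y) + q5*Y^2) * (Z-X)))
    (L * ((p1*(Z-X) + p2*(W-Y) + 2*p3*(X*(Z-X)) + p4*(X*(W-Y) + Y*(Z-X)) + 2*p5*(Y*(W-Y))) * (W-Y) - (q1*(Z-X) + q2*(W-Y) + 2*q3*(X*(Z-X)) + q4*(X*(W-Y) + Y*(Z-X)) + 2*q5*(Y*(W-Y))) * (Z-X)))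
    (L * ((p3*(Z-X)^2 + p4*((Z-X)*(W-Y)) + p5*(W-Y)^2) * (W-Y) - (q3*(Z-X)^2 + q4*((Z-X)*(W-Y)) + q5*(W-Y)^2) * (Z-X)))
    (fun t => by rw [hg]; ring) h0 h1 h2

lemma edgeT (p0 p1 p2 p3 p4 p5 q0 q1 q2 q3 q4 q5 X Y Z W L : ℝ) (g : ℝ → ℝ)
    (hg : ∀ t : ℝ, g t = L * ((p0 + p1*(X + t*(Z-X)) + p2*(Y + t*(W-Y)) + p3*(X + t*(Z-X))^2 + p4*((X + t*(Z-X))*(Y + t*(W-Y))) + p5*(Y + t*(W-Y))^2) * (Z-X) + (q0 + q1*(X + t*(Z-X)) + q2*(Y + t*(W-Y)) + q3*(X + t*(Z-X))^2 + q4*((X + t*(Z-X))*(Y + t*(W-Y))) + q5*(Y + t*(W-Y))^2) * (W-Y)))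
    (h0 : g 0 = 0) (h1 : g 1 = 0)
    (hint : (∫ t in (0:ℝ)..1, g t) = 0) :
    ∀ s, g s = 0 := by
  refine quadzero g
    (L * ((p0 + p1*X + p2*Y + p3*X^2 + p4*(X*Y) + p5*Y^2) * (Z-X) + (q0 + q1*X + q2*Y + q3*X^2 + q4*(X*Y) + q5*Y^2) * (W-Y)))
    (L * ((p1*(Z-X) + p2*(W-Y) + 2*p3*(X*(Z-X)) + p4*(X*(W-Y) + Y*(Z-X)) + 2*p5*(Y*(W-Y))) * (Z-X) + (q1*(Z-X) + q2*(W-Y) + 2*q3*(X*(Z-X)) + q4*(X*(W-Y) + Y*(Z-X)) + 2*q5*(Y*(W-Y))) * (W-Y)))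
    (L * ((p3*(Z-X)^2 + p4*((Z-X)*(W-Y)) + p5*(W-Y)^2) * (Z-X) + (q3*(Z-X)^2 + q4*((Z-X)*(W-Y)) + q5*(W-Y)^2) * (W-Y)))
    (fun t => by rw [hg]; ring) h0 h1 hint

lemma solve2 (u : ℝ × ℝ) (m1 m2 n1 n2 : ℝ)
    (h1 : u.1*m1 + u.2*m2 = 0) (h2 : u.1*n1 + u.2*n2 = 0)
    (hdet : m1*n2 - m2*n1 ≠ 0) : u = 0 := by
  have hu1 : u.1 = 0 := by
    have h : u.1 * (m1*n2 - m2*n1) = 0 := by linear_combination n2 * h1 - m2 * h2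
    exact (mul_eq_zero.1 h).resolve_right hdet
  have hu2 : u.2 = 0 := by
    have h : u.2 * (m1*n2 - m2*n1) = 0 := by linear_combination m1 * h2 - n1 * h1
    exact (mul_eq_zero.1 h).resolve_right hdet
  exact Prod.ext hu1 hu2



lemma rep2 (R : MvPolynomial (Fin 2) ℝ) (hR : R.totalDegree ≤ 2) (x y : ℝ) :
    eval ![x, y] R =
      R.coeff 0 + R.coeff (Finsupp.single 0 1) * x + R.coeff (Finsupp.single 1 1) * y
      + R.coeff (Finsupp.single 0 2) * x^2
      + R.coeff (Finsupp.single 0 1 + Finsupp.single 1 1) * (x*y)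
      + R.coeff (Finsupp.single 1 2) * y^2 := by
  have hsupp : R.support ⊆ ({0, Finsupp.single 0 1, Finsupp.single 1 1,
      Finsupp.single 0 2, Finsupp.single 0 1 + Finsupp.single 1 1,
      Finsupp.single 1 2} : Finset ((Fin 2) →₀ ℕ)) := by
    intro m hm
    have hdeg : m 0 + m 1 ≤ 2 := by
      have h1 := MvPolynomial.le_totalDegree hm
      have h2 : m.sum (fun _ e => e) = m 0 + m 1 := by
        rw [Finsupp.sum_fintype] <;> simp [Fin.sum_univ_two]
      omega
    have hme : m = Finsupp.single 0 (m 0) + Finsupp.single 1 (m 1) := by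
      ext i; fin_cases i <;> simp
    have hc : (m 0 = 0 ∧ m 1 = 0) ∨ (m 0 = 1 ∧ m 1 = 0) ∨ (m 0 = 0 ∧ m 1 = 1)
        ∨ (m 0 = 2 ∧ m 1 = 0) ∨ (m 0 = 1 ∧ m 1 = 1) ∨ (m 0 = 0 ∧ m 1 = 2) := by omega
    simp only [Finset.mem_insert, Finset.mem_singleton]
    rcases hc with ⟨h0,h1⟩|⟨h0,h1⟩|⟨h0,h1⟩|⟨h0,h1⟩|⟨h0,h1⟩|⟨h0,h1⟩ <;>
      rw [hme, h0, h1] <;> simp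
  rw [MvPolynomial.eval_eq']
  rw [Finset.sum_subset hsupp (by
    intro m _ hm
    simp [MvPolynomial.mem_support_iff, not_not] at hm
    simp [hm])]
  rw [Finset.sum_insert (by simp [Finsupp.ext_iff, Fin.forall_fin_two]),
    Finset.sum_insert (by simp [Finsupp.ext_iff, Fin.forall_fin_two]),
    Finset.sum_insert (by simp [Finsupp.ext_iff, Fin.forall_fin_two]),
    Finset.sum_insert (by simp [Finsupp.ext_iff, Fin.forall_fin_two]),
    Finset.sum_insert (by simp [Finsupp.ext_iff, Fin.forall_fin_two]), Finset.sum_singleton]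
  simp [Fin.prod_univ_two, MvPolynomial.coeff]
  ring

lemma repfull (R : MvPolynomial (Fin 2) ℝ) (hR : R.totalDegree ≤ 2) :
    ∃ c0 c1 c2 c3 c4 c5 : ℝ,
      (∀ x y : ℝ, eval ![x, y] R = c0 + c1*x + c2*y + c3*x^2 + c4*(x*y) + c5*y^2) ∧
      (c0 = 0 → c1 = 0 → c2 = 0 → c3 = 0 → c4 = 0 → c5 = 0 → R = 0) := by
  refine ⟨_, _, _, _, _, _, fun x y => rep2 R hR x y, ?_⟩
  intro h0 h1 h2 h3 h4 h5
  apply MvPolynomial.funext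
  intro x
  have hx : x = ![x 0, x 1] := by funext k; fin_cases k <;> rfl
  rw [hx, rep2 R hR, h0, h1, h2, h3, h4, h5]
  simp

lemma cross_ne_zero (a : Fin 3 → ℝ × ℝ) (hnd : AffineIndependent ℝ a) :
    ((a 1).1 - (a 0).1) * ((a 2).2 - (a 0).2)
      - ((a 2).1 - (a 0).1) * ((a 1).2 - (a 0).2) ≠ 0 := by
  intro hD
  rw [affineIndependent_iff_not_collinear] at hnd
  apply hnd
  have h0 : a 0 ∈ Set.range a := ⟨0, rfl⟩
  rw [collinear_iff_of_mem h0]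
  set u : ℝ × ℝ := a 1 - a 0 with hu
  set w : ℝ × ℝ := a 2 - a 0 with hw
  have key : ∀ z : ℝ × ℝ, (z = a 0 ∨ z = a 1 ∨ z = a 2) →
      ∃ r : ℝ, z = r • (if u = 0 then w else u) +ᵥ a 0 := by
    intro z hz
    by_cases hu0 : u = 0
    · simp only [hu0, if_true]
      rcases hz with rfl | rfl | rfl
      · exact ⟨0, by simp⟩
      · refine ⟨0, ?_⟩
        have : a 1 = a 0 := by
          have := hu0; rw [hu, sub_eq_zero] at this; exact this
        simp [this]
      · exact ⟨1, by simp [hw, Prod.ext_iff]⟩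
    · simp only [hu0, if_false]
      rcases hz with rfl | rfl | rfl
      · exact ⟨0, by simp⟩
      · exact ⟨1, by simp [hu, Prod.ext_iff]⟩
      · have hcross : u.1 * w.2 - w.1 * u.2 = 0 := by
          simp only [hu, hw, Prod.fst_sub, Prod.snd_sub]
          linear_combination hD
        have hne : u.1 ≠ 0 ∨ u.2 ≠ 0 := by
          by_contra h
          push_neg at h
          exact hu0 (Prod.ext h.1 h.2)
        rcases hne with h1 | h2
        · refine ⟨w.1 / u.1, ?_⟩
          have e1 : (w.1/u.1) * u.1 = w.1 := by field_simp
          have e2 : (w.1/u.1) * u.2 = w.2 := by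
            field_simp; linear_combination -hcross
          have : (w.1/u.1) • u = w := Prod.ext e1 e2
          rw [this]; simp [hw]
        · refine ⟨w.2 / u.2, ?_⟩
          have e1 : (w.2/u.2) * u.1 = w.1 := by
            field_simp; linear_combination hcross
          have e2 : (w.2/u.2) * u.2 = w.2 := by field_simp
          have : (w.2/u.2) • u = w := Prod.ext e1 e2
          rw [this]; simp [hw]
  refine ⟨if u = 0 then w else u, ?_⟩
  intro p hp
  obtain ⟨k, rfl⟩ := hp
  apply key
  fin_cases k <;> simp




/-- Unisolvence of the new vector `P₂` element: on a nondegenerate triangle with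
vertices `a 0, a 1, a 2`, a vector field `v` with quadratic polynomial components
whose twelve edge degrees of freedom (three normal moments against `1`, `λ_j - λ_k`,
`-λ_j λ_k + 1/6`, and the mean tangential component, on each edge) all vanish must be
identically zero. Edge `e i` (opposite vertex `a i`) is parametrized by
`γ i t = a (i+1) + t • (a (i+2) - a (i+1))`, so that the barycentric coordinates of
its two endpoints restrict to `λ_j = 1 - t` and `λ_k = t`. -/
theorem new_P2_element_unisolvent
    (a : Fin 3 → ℝ × ℝ)
    (hnd : AffineIndependent ℝ a)
    (P Q : MvPolynomial (Fin 2) ℝ)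
    (hP : P.totalDegree ≤ 2) (hQ : Q.totalDegree ≤ 2)
    (v : ℝ × ℝ → ℝ × ℝ)
    (hv : ∀ x : ℝ × ℝ,
      v x = (MvPolynomial.eval ![x.1, x.2] P, MvPolynomial.eval ![x.1, x.2] Q))
    (γ : Fin 3 → ℝ → ℝ × ℝ)
    (hγ : ∀ i t, γ i t = a (i + 1) + t • (a (i + 2) - a (i + 1)))
    (len : Fin 3 → ℝ)
    (hlen : ∀ i, len i
      = Real.sqrt ((a (i + 2) - a (i + 1)).1 ^ 2 + (a (i + 2) - a (i + 1)).2 ^ 2))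
    (tg nor : Fin 3 → ℝ × ℝ)
    (htg : ∀ i, tg i = (len i)⁻¹ • (a (i + 2) - a (i + 1)))
    (hnor : ∀ i, nor i
      = (len i)⁻¹ • ((a (i + 2) - a (i + 1)).2, -(a (i + 2) - a (i + 1)).1))
    (dot : ℝ × ℝ → ℝ × ℝ → ℝ)
    (hdot : ∀ u w : ℝ × ℝ, dot u w = u.1 * w.1 + u.2 * w.2)
    (dof0 : ∀ i, (∫ t in (0:ℝ)..1, dot (v (γ i t)) (nor i)) = 0)
    (dof1 : ∀ i,
      (∫ t in (0:ℝ)..1, dot (v (γ i t)) (nor i) * ((1 - t) - t)) = 0)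
    (dof2 : ∀ i,
      (∫ t in (0:ℝ)..1, dot (v (γ i t)) (nor i) * (-((1 - t) * t) + 1 / 6)) = 0)
    (dof3 : ∀ i, (∫ t in (0:ℝ)..1, dot (v (γ i t)) (tg i)) = 0) :
    P = 0 ∧ Q = 0 := by
  have i01 : (0:Fin 3)+1 = 1 := rfl
  have i02 : (0:Fin 3)+2 = 2 := rfl
  have i11 : (1:Fin 3)+1 = 2 := rfl
  have i12 : (1:Fin 3)+2 = 0 := rfl
  have i21 : (2:Fin 3)+1 = 0 := rfl
  have i22 : (2:Fin 3)+2 = 1 := rfl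
  have idx1 : ∀ i : Fin 3, i + 1 + 1 = i + 2 := by decide
  have idx2 : ∀ i : Fin 3, i + 1 + 2 = i := by decide
  have idx3 : ∀ i : Fin 3, i + 2 + 1 = i := by decide
  have idx4 : ∀ i : Fin 3, i + 2 + 2 = i + 1 := by decide
  have idne : ∀ i : Fin 3, i + 1 ≠ i + 2 := by decide
  have jcases : ∀ j : Fin 3, j = 0 ∨ j = 1 ∨ j = 2 := by decide
  have hD := cross_ne_zero a hnd
  have hd2pos : ∀ i : Fin 3, 0 < ((a (i+2)).1 - (a (i+1)).1)^2 + ((a (i+2)).2 - (a (i+1)).2)^2 := by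
    intro i
    by_contra hc
    push_neg at hc
    have e1 : (a (i+2)).1 - (a (i+1)).1 = 0 := by
      nlinarith [sq_nonneg ((a (i+2)).1 - (a (i+1)).1), sq_nonneg ((a (i+2)).2 - (a (i+1)).2)]
    have e2 : (a (i+2)).2 - (a (i+1)).2 = 0 := by
      nlinarith [sq_nonneg ((a (i+2)).1 - (a (i+1)).1), sq_nonneg ((a (i+2)).2 - (a (i+1)).2)]
    exact idne i (hnd.injective (Prod.ext (by linarith) (by linarith)))
  have hlenpos : ∀ i, 0 < len i := by
    intro i
    rw [hlen]
    apply Real.sqrt_pos.2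
    have := hd2pos i
    simpa using this
  have hinv : ∀ i, (len i)⁻¹ ≠ 0 := fun i => inv_ne_zero (ne_of_gt (hlenpos i))
  have hγfst : ∀ i (t:ℝ), (γ i t).1 = (a (i+1)).1 + t * ((a (i+2)).1 - (a (i+1)).1) := by
    intro i t; rw [hγ]; simp
  have hγsnd : ∀ i (t:ℝ), (γ i t).2 = (a (i+1)).2 + t * ((a (i+2)).2 - (a (i+1)).2) := by
    intro i t; rw [hγ]; simp
  have hγzero : ∀ i, γ i 0 = a (i+1) := by
    intro i; rw [hγ]; simp
  have hγone : ∀ i, γ i 1 = a (i+2) := by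
    intro i; rw [hγ]; simp
  have hdotnor : ∀ i (z : ℝ × ℝ), dot z (nor i)
      = (len i)⁻¹ * (z.1 * ((a (i+2)).2 - (a (i+1)).2) - z.2 * ((a (i+2)).1 - (a (i+1)).1)) := by
    intro i z; rw [hdot, hnor]; simp; ring
  have hdottg : ∀ i (z : ℝ × ℝ), dot z (tg i)
      = (len i)⁻¹ * (z.1 * ((a (i+2)).1 - (a (i+1)).1) + z.2 * ((a (i+2)).2 - (a (i+1)).2)) := by
    intro i z; rw [hdot, htg]; simp; ring
  obtain ⟨p0,p1,p2,p3,p4,p5,hrP,hPz⟩ := repfull P hP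
  obtain ⟨q0,q1,q2,q3,q4,q5,hrQ,hQz⟩ := repfull Q hQ
  have hc1 : ∀ x : ℝ × ℝ, (v x).1 = p0 + p1*x.1 + p2*x.2 + p3*x.1^2 + p4*(x.1*x.2) + p5*x.2^2 := by
    intro x; rw [hv]; exact hrP x.1 x.2
  have hc2 : ∀ x : ℝ × ℝ, (v x).2 = q0 + q1*x.1 + q2*x.2 + q3*x.1^2 + q4*(x.1*x.2) + q5*x.2^2 := by
    intro x; rw [hv]; exact hrQ x.1 x.2
  have hA : ∀ i (s : ℝ), dot (v (γ i s)) (nor i) = 0 := by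
    intro i
    refine edgeA p0 p1 p2 p3 p4 p5 q0 q1 q2 q3 q4 q5 ((a (i+1)).1) ((a (i+1)).2) ((a (i+2)).1) ((a (i+2)).2) ((len i)⁻¹)
      (fun t => dot (v (γ i t)) (nor i)) (fun t => ?_) (dof0 i) (dof1 i) (dof2 i)
    beta_reduce
    rw [hdotnor, hc1, hc2, hγfst, hγsnd]
  have hcyc : ∀ j : Fin 3,
      ((a j).1 - (a (j+2)).1) * ((a (j+1)).2 - (a j).2)
        - ((a j).2 - (a (j+2)).2) * ((a (j+1)).1 - (a j).1)
      = (((a 1).1 - (a 0).1) * ((a 2).2 - (a 0).2) - ((a 2).1 - (a 0).1) * ((a 1).2 - (a 0).2)) := by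
    intro j
    rcases jcases j with rfl | rfl | rfl <;>
      simp only [i01, i02, i11, i12, i21, i22] <;> ring
  have hV : ∀ j : Fin 3, v (a j) = 0 := by
    intro j
    have h1 := hA (j+1) 1
    have h2 := hA (j+2) 0
    rw [hγone] at h1
    rw [hγzero] at h2
    rw [hdotnor] at h1 h2
    rw [idx1, idx2] at h1
    rw [idx3, idx4] at h2
    have h1' : (v (a j)).1 * ((a j).2 - (a (j+2)).2)
        - (v (a j)).2 * ((a j).1 - (a (j+2)).1) = 0 :=
      (mul_eq_zero.1 h1).resolve_left (hinv (j+1))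
    have h2' : (v (a j)).1 * ((a (j+1)).2 - (a j).2)
        - (v (a j)).2 * ((a (j+1)).1 - (a j).1) = 0 :=
      (mul_eq_zero.1 h2).resolve_left (hinv (j+2))
    refine solve2 (v (a j)) ((a j).2 - (a (j+2)).2) (-((a j).1 - (a (j+2)).1))
      ((a (j+1)).2 - (a j).2) (-((a (j+1)).1 - (a j).1))
      (by linear_combination h1') (by linear_combination h2') ?_
    intro hcon
    exact hD (by linear_combination hcon - hcyc j)
  have hT : ∀ i (s : ℝ), dot (v (γ i s)) (tg i) = 0 := by
    intro i
    refine edgeT p0 p1 p2 p3 p4 p5 q0 q1 q2 q3 q4 q5 ((a (i+1)).1) ((a (i+1)).2) ((a (i+2)).1) ((a (i+2)).2) ((len i)⁻¹)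
      (fun t => dot (v (γ i t)) (tg i)) (fun t => ?_) ?_ ?_ (dof3 i)
    · beta_reduce
      rw [hdottg, hc1, hc2, hγfst, hγsnd]
    · show dot (v (γ i 0)) (tg i) = 0
      rw [hγzero, hV, hdot]
      simp
    · show dot (v (γ i 1)) (tg i) = 0
      rw [hγone, hV, hdot]
      simp
  have hz : ∀ i (s : ℝ), v (γ i s) = 0 := by
    intro i s
    have h1 := hA i s
    have h2 := hT i s
    rw [hdotnor] at h1
    rw [hdottg] at h2
    have h1' := (mul_eq_zero.1 h1).resolve_left (hinv i)
    have h2' := (mul_eq_zero.1 h2).resolve_left (hinv i)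
    refine solve2 (v (γ i s)) ((a (i+2)).2 - (a (i+1)).2) (-((a (i+2)).1 - (a (i+1)).1)) ((a (i+2)).1 - (a (i+1)).1) ((a (i+2)).2 - (a (i+1)).2)
      (by linear_combination h1') (by linear_combination h2') ?_
    intro hcon
    nlinarith [hd2pos i, hcon]
  have vertP : ∀ j : Fin 3, p0 + p1*(a j).1 + p2*(a j).2 + p3*(a j).1^2
      + p4*((a j).1*(a j).2) + p5*(a j).2^2 = 0 := by
    intro j
    have h1 := congrArg Prod.fst (hV j)
    rw [hc1] at h1
    simpa using h1
  have vertQ : ∀ j : Fin 3, q0 + q1*(a j).1 + q2*(a j).2 + q3*(a j).1^2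
      + q4*((a j).1*(a j).2) + q5*(a j).2^2 = 0 := by
    intro j
    have h1 := congrArg Prod.snd (hV j)
    rw [hc2] at h1
    simpa using h1
  have hquadP : ∀ i : Fin 3, p3*((a (i+2)).1 - (a (i+1)).1)^2 + p4*(((a (i+2)).1 - (a (i+1)).1)*((a (i+2)).2 - (a (i+1)).2))
      + p5*((a (i+2)).2 - (a (i+1)).2)^2 = 0 := by
    intro i
    have hm := congrArg Prod.fst (hz i 2⁻¹)
    rw [hc1, hγfst, hγsnd] at hm
    simp only [Prod.fst_zero] at hm
    linear_combination 2*(vertP (i+1)) + 2*(vertP (i+2)) - 4*hm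
  have hquadQ : ∀ i : Fin 3, q3*((a (i+2)).1 - (a (i+1)).1)^2 + q4*(((a (i+2)).1 - (a (i+1)).1)*((a (i+2)).2 - (a (i+1)).2))
      + q5*((a (i+2)).2 - (a (i+1)).2)^2 = 0 := by
    intro i
    have hm := congrArg Prod.snd (hz i 2⁻¹)
    rw [hc2, hγfst, hγsnd] at hm
    simp only [Prod.snd_zero] at hm
    linear_combination 2*(vertQ (i+1)) + 2*(vertQ (i+2)) - 4*hm
  have hqa0 := hquadP 0
  have hqa1 := hquadP 1
  have hqa2 := hquadP 2
  simp only [i01, i02, i11, i12, i21, i22] at hqa0 hqa1 hqa2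
  have hp3 : p3 = 0 := by
    have h : (((a 1).1 - (a 0).1) * ((a 2).2 - (a 0).2) - ((a 2).1 - (a 0).1) * ((a 1).2 - (a 0).2))^2 * p3 = 0 := by
      linear_combination (-(((a 0).2 - (a 2).2)*((a 1).2 - (a 0).2)))*hqa0 + (((a 1).2 - (a 0).2)^2 + ((a 0).2 - (a 2).2)*((a 1).2 - (a 0).2))*hqa1 + (((a 0).2 - (a 2).2)^2 + ((a 0).2 - (a 2).2)*((a 1).2 - (a 0).2))*hqa2
    exact (mul_eq_zero.1 h).resolve_left (pow_ne_zero 2 hD)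
  have hp4 : p4 = 0 := by
    have h : (((a 1).1 - (a 0).1) * ((a 2).2 - (a 0).2) - ((a 2).1 - (a 0).1) * ((a 1).2 - (a 0).2))^2 * p4 = 0 := by
      linear_combination (((a 0).1 - (a 2).1)*((a 1).2 - (a 0).2)+((a 1).1 - (a 0).1)*((a 0).2 - (a 2).2))*hqa0 + (-2*((a 1).2 - (a 0).2)*((a 1).1 - (a 0).1) - (((a 0).1 - (a 2).1)*((a 1).2 - (a 0).2)+((a 1).1 - (a 0).1)*((a 0).2 - (a 2).2)))*hqa1 + (-2*((a 0).2 - (a 2).2)*((a 0).1 - (a 2).1) - (((a 0).1 - (a 2).1)*((a 1).2 - (a 0).2)+((a 1).1 - (a 0).1)*((a 0).2 - (a 2).2)))*hqa2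
    exact (mul_eq_zero.1 h).resolve_left (pow_ne_zero 2 hD)
  have hp5 : p5 = 0 := by
    have h : (((a 1).1 - (a 0).1) * ((a 2).2 - (a 0).2) - ((a 2).1 - (a 0).1) * ((a 1).2 - (a 0).2))^2 * p5 = 0 := by
      linear_combination (-(((a 0).1 - (a 2).1)*((a 1).1 - (a 0).1)))*hqa0 + (((a 1).1 - (a 0).1)^2 + ((a 0).1 - (a 2).1)*((a 1).1 - (a 0).1))*hqa1 + (((a 0).1 - (a 2).1)^2 + ((a 0).1 - (a 2).1)*((a 1).1 - (a 0).1))*hqa2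
    exact (mul_eq_zero.1 h).resolve_left (pow_ne_zero 2 hD)
  have hw0 := vertP 0
  have hw1 := vertP 1
  have hw2 := vertP 2
  rw [hp3, hp4, hp5] at hw0 hw1 hw2
  have hp1 : p1 = 0 := by
    have h : (((a 1).1 - (a 0).1) * ((a 2).2 - (a 0).2) - ((a 2).1 - (a 0).1) * ((a 1).2 - (a 0).2)) * p1 = 0 := by
      linear_combination ((a 2).2-(a 0).2)*hw1 - ((a 2).2-(a 0).2)*hw0 - ((a 1).2-(a 0).2)*hw2 + ((a 1).2-(a 0).2)*hw0
    exact (mul_eq_zero.1 h).resolve_left hD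
  have hp2 : p2 = 0 := by
    have h : (((a 1).1 - (a 0).1) * ((a 2).2 - (a 0).2) - ((a 2).1 - (a 0).1) * ((a 1).2 - (a 0).2)) * p2 = 0 := by
      linear_combination (-((a 2).1-(a 0).1))*hw1 + ((a 2).1-(a 0).1)*hw0 + ((a 1).1-(a 0).1)*hw2 - ((a 1).1-(a 0).1)*hw0
    exact (mul_eq_zero.1 h).resolve_left hD
  have hp0 : p0 = 0 := by
    rw [hp1, hp2] at hw0
    linarith [hw0]
  clear hqa0 hqa1 hqa2 hw0 hw1 hw2
  have hqa0 := hquadQ 0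
  have hqa1 := hquadQ 1
  have hqa2 := hquadQ 2
  simp only [i01, i02, i11, i12, i21, i22] at hqa0 hqa1 hqa2
  have hq3 : q3 = 0 := by
    have h : (((a 1).1 - (a 0).1) * ((a 2).2 - (a 0).2) - ((a 2).1 - (a 0).1) * ((a 1).2 - (a 0).2))^2 * q3 = 0 := by
      linear_combination (-(((a 0).2 - (a 2).2)*((a 1).2 - (a 0).2)))*hqa0 + (((a 1).2 - (a 0).2)^2 + ((a 0).2 - (a 2).2)*((a 1).2 - (a 0).2))*hqa1 + (((a 0).2 - (a 2).2)^2 + ((a 0).2 - (a 2).2)*((a 1).2 - (a 0).2))*hqa2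
    exact (mul_eq_zero.1 h).resolve_left (pow_ne_zero 2 hD)
  have hq4 : q4 = 0 := by
    have h : (((a 1).1 - (a 0).1) * ((a 2).2 - (a 0).2) - ((a 2).1 - (a 0).1) * ((a 1).2 - (a 0).2))^2 * q4 = 0 := by
      linear_combination (((a 0).1 - (a 2).1)*((a 1).2 - (a 0).2)+((a 1).1 - (a 0).1)*((a 0).2 - (a 2).2))*hqa0 + (-2*((a 1).2 - (a 0).2)*((a 1).1 - (a 0).1) - (((a 0).1 - (a 2).1)*((a 1).2 - (a 0).2)+((a 1).1 - (a 0).1)*((a 0).2 - (a 2).2)))*hqa1 + (-2*((a 0).2 - (a 2).2)*((a 0).1 - (a 2).1) - (((a 0).1 - (a 2).1)*((a 1).2 - (a 0).2)+((a 1).1 - (a 0).1)*((a 0).2 - (a 2).2)))*hqa2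
    exact (mul_eq_zero.1 h).resolve_left (pow_ne_zero 2 hD)
  have hq5 : q5 = 0 := by
    have h : (((a 1).1 - (a 0).1) * ((a 2).2 - (a 0).2) - ((a 2).1 - (a 0).1) * ((a 1).2 - (a 0).2))^2 * q5 = 0 := by
      linear_combination (-(((a 0).1 - (a 2).1)*((a 1).1 - (a 0).1)))*hqa0 + (((a 1).1 - (a 0).1)^2 + ((a 0).1 - (a 2).1)*((a 1).1 - (a 0).1))*hqa1 + (((a 0).1 - (a 2).1)^2 + ((a 0).1 - (a 2).1)*((a 1).1 - (a 0).1))*hqa2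
    exact (mul_eq_zero.1 h).resolve_left (pow_ne_zero 2 hD)
  have hw0 := vertQ 0
  have hw1 := vertQ 1
  have hw2 := vertQ 2
  rw [hq3, hq4, hq5] at hw0 hw1 hw2
  have hq1 : q1 = 0 := by
    have h : (((a 1).1 - (a 0).1) * ((a 2).2 - (a 0).2) - ((a 2).1 - (a 0).1) * ((a 1).2 - (a 0).2)) * q1 = 0 := by
      linear_combination ((a 2).2-(a 0).2)*hw1 - ((a 2).2-(a 0).2)*hw0 - ((a 1).2-(a 0).2)*hw2 + ((a 1).2-(a 0).2)*hw0
    exact (mul_eq_zero.1 h).resolve_left hD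
  have hq2 : q2 = 0 := by
    have h : (((a 1).1 - (a 0).1) * ((a 2).2 - (a 0).2) - ((a 2).1 - (a 0).1) * ((a 1).2 - (a 0).2)) * q2 = 0 := by
      linear_combination (-((a 2).1-(a 0).1))*hw1 + ((a 2).1-(a 0).1)*hw0 + ((a 1).1-(a 0).1)*hw2 - ((a 1).1-(a 0).1)*hw0
    exact (mul_eq_zero.1 h).resolve_left hD
  have hq0 : q0 = 0 := by
    rw [hq1, hq2] at hw0
    linarith [hw0]
  clear hqa0 hqa1 hqa2 hw0 hw1 hw2
  exact ⟨hPz hp0 hp1 hp2 hp3 hp4 hp5, hQz hq0 hq1 hq2 hq3 hq4 hq5⟩
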